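/- Let (X,ρ) be a metric space and {A_k} a bounded sequence of nonempty closed subsets of X. Let λ, μ be strictly increasing sequences of positive integers with lim_{n→∞} n/λ(n) > 0 and lim_{n→∞} n/μ(n) > 0. Then {A_k} is Wijsman C_λ summable to A if and only if it is Wijsman C_μ summable to A. -/

import Mathlib

/-!
Both conditions are equivalent to ordinary Wijsman Cesàro summability (λ = id): Cesàro
summability passes to the means indexed by a strictly increasing λ, and the liminf condition gives
m ≤ λ(m) ≤ C m for the converse. For that, fix x and a point x₀ ∈ S with ρ(x, x₀) < d(x, S) + η.
Then d(x, A_k) ≤ d(x₀, A_k) + d(x, S) + η, and the λ-means of d(x₀, A_k) tend to d(x₀, S) = 0;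
together these bound the terms of the λ(m)-th sum beyond index m, so that the m-th mean differs
from the λ(m)-th one by O(Cη).
-/

open Filter Metric Finset Topology

noncomputable def cesaroMean (a : ℕ → ℝ) (n : ℕ) : ℝ :=
  1 / n * ∑ k ∈ Icc 1 n, a k

lemma cesaroMean_nonneg {a : ℕ → ℝ} (ha : ∀ k, 0 ≤ a k) {n : ℕ} : 0 ≤ cesaroMean a n :=
  mul_nonneg (by positivity) (sum_nonneg fun k _ => ha k)

lemma sum_Icc_one_add_sum_Ioc {a : ℕ → ℝ} {m L : ℕ} (h : m ≤ L) :
    ∑ k ∈ Icc 1 m, a k + ∑ k ∈ Ioc m L, a k = ∑ k ∈ Icc 1 L, a k := by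
  have Icc_one (n : ℕ) : Icc 1 n = Ioc 0 n := Icc_add_one_left_eq_Ioc 0 n
  rw [Icc_one, Icc_one, sum_Ioc_consecutive _ m.zero_le h]

lemma abs_cesaroMean_sub_le {a b : ℕ → ℝ} {D η : ℝ} (hb : ∀ k, 0 ≤ b k) (hη : 0 ≤ η)
    (hab : ∀ k, a k ≤ b k + (D + η)) {m L : ℕ} (hm : 0 < m) (hmL : m ≤ L) :
    |cesaroMean a m - D| ≤ L / m * (|cesaroMean a L - D| + cesaroMean b L + η) := by
  have hm' : (0 : ℝ) < m := Nat.cast_pos.mpr hm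
  have hmL' : (m : ℝ) ≤ L := Nat.cast_le.mpr hmL
  have hL' : (0 : ℝ) < L := hm'.trans_le hmL'
  have mean_mul (c : ℕ → ℝ) (n : ℕ) (hn : (0 : ℝ) < n) :
      cesaroMean c n * n = ∑ k ∈ Icc 1 n, c k := by
    rw [cesaroMean]; field_simp
  have hsplit_a := sum_Icc_one_add_sum_Ioc (a := a) hmL
  have hsplit_b := sum_Icc_one_add_sum_Ioc (a := b) hmL
  have hgap : ∑ k ∈ Ioc m L, a k ≤ ∑ k ∈ Ioc m L, b k + (L - m) * (D + η) := by
    grw [sum_le_sum fun k _ => hab k, sum_add_distrib, sum_const, Nat.card_Ioc, nsmul_eq_mul,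
      Nat.cast_sub hmL]
  have hhead : ∑ k ∈ Icc 1 m, a k ≤ ∑ k ∈ Icc 1 m, b k + m * (D + η) := by
    grw [sum_le_sum fun k _ => hab k, sum_add_distrib, sum_const, Nat.card_Icc, nsmul_eq_mul,
      Nat.add_sub_cancel]
  have hb_head : 0 ≤ ∑ k ∈ Icc 1 m, b k := sum_nonneg fun k _ => hb k
  have hb_gap : 0 ≤ ∑ k ∈ Ioc m L, b k := sum_nonneg fun k _ => hb k
  set u := cesaroMean a L - D
  have hu := mul_le_mul_of_nonneg_left (neg_abs_le u) hL'.le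
  have hmη : m * η ≤ L * η := mul_le_mul_of_nonneg_right hmL' hη
  have key : |cesaroMean a m * m - m * D| ≤ L * (|u| + cesaroMean b L + η) := by
    rw [mean_mul a m hm', abs_le]
    have := mean_mul a L hL'
    have := mean_mul b L hL'
    constructor <;> nlinarith [abs_nonneg u]
  have hscale : |cesaroMean a m - D| * m = |cesaroMean a m * m - m * D| := by
    rw [show cesaroMean a m * m - m * D = (cesaroMean a m - D) * m by ring, abs_mul,
      abs_of_pos hm']
  rwa [div_mul_eq_mul_div, le_div_iff₀ hm', hscale]

lemma exists_le_mul_of_liminf_div_pos {l : ℕ → ℕ}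
    (h : 0 < liminf (fun n : ℕ => (n : ℝ) / l n) atTop) :
    ∃ C > 0, ∀ᶠ n in atTop, (l n : ℝ) ≤ C * n := by
  set δ := liminf (fun n : ℕ => (n : ℝ) / l n) atTop
  have hev : ∀ᶠ n : ℕ in atTop, δ / 2 < (n : ℝ) / l n :=
    eventually_lt_of_lt_liminf (by linarith)
      (isBoundedUnder_of ⟨0, fun n => by positivity⟩)
  refine ⟨2 / δ, by positivity, ?_⟩
  filter_upwards [hev] with n hn
  have hl : (0 : ℝ) < l n := by
    by_contra! hl0
    rw [le_antisymm hl0 (Nat.cast_nonneg _), div_zero] at hn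
    linarith
  rw [lt_div_iff₀ hl] at hn
  rw [div_mul_eq_mul_div, le_div_iff₀ h]
  linarith

section Wijsman

variable {X : Type*} [MetricSpace X]

def WijsmanLambdaSummable (A : ℕ → Set X) (S : Set X) (l : ℕ → ℕ) : Prop :=
  ∀ x, Tendsto (fun n => cesaroMean (fun k => infDist x (A k)) (l n)) atTop (𝓝 (infDist x S))

namespace WijsmanLambdaSummable

variable {A : ℕ → Set X} {S : Set X} {l : ℕ → ℕ}

lemma comp (h : WijsmanLambdaSummable A S l) {φ : ℕ → ℕ} (hφ : Tendsto φ atTop atTop) :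
    WijsmanLambdaSummable A S (l ∘ φ) :=
  fun x => (h x).comp hφ

lemma id_of_le_mul (h : WijsmanLambdaSummable A S l) (hS : S.Nonempty) (hl : ∀ m, m ≤ l m)
    {C : ℝ} (hC : 0 < C) (hlC : ∀ᶠ m in atTop, (l m : ℝ) ≤ C * m) :
    WijsmanLambdaSummable A S id := by
  intro x
  rw [Metric.tendsto_nhds]
  intro ε hε
  set η := ε / (3 * C) with hη_def
  have hη : 0 < η := by positivity
  obtain ⟨x₀, hx₀S, hx₀⟩ : ∃ y ∈ S, dist x y < infDist x S + η :=
    (infDist_lt_iff hS).mp (by linarith)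
  have hx := Metric.tendsto_nhds.mp (h x) η hη
  have hx₀' := Metric.tendsto_nhds.mp (h x₀) η hη
  rw [infDist_zero_of_mem hx₀S] at hx₀'
  filter_upwards [hlC, hx, hx₀', eventually_gt_atTop 0] with m hlm hxm hx₀m hm
  rw [Real.dist_eq] at hxm hx₀m ⊢
  rw [sub_zero] at hx₀m
  have hab (k : ℕ) : infDist x (A k) ≤ infDist x₀ (A k) + (infDist x S + η) :=
    infDist_le_infDist_add_dist.trans (by linarith)
  have hratio : (l m : ℝ) / m ≤ C := (div_le_iff₀ (by positivity)).mpr hlm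
  calc |cesaroMean (fun k => infDist x (A k)) m - infDist x S|
      ≤ l m / m * (|cesaroMean (fun k => infDist x (A k)) (l m) - infDist x S|
          + cesaroMean (fun k => infDist x₀ (A k)) (l m) + η) :=
        abs_cesaroMean_sub_le (fun _ => infDist_nonneg) hη.le hab hm (hl m)
    _ ≤ C * (|cesaroMean (fun k => infDist x (A k)) (l m) - infDist x S|
          + cesaroMean (fun k => infDist x₀ (A k)) (l m) + η) := by
        gcongr
        exact add_nonneg (add_nonneg (abs_nonneg _) (cesaroMean_nonneg fun _ => infDist_nonneg))
          hη.le
    _ < C * (3 * η) := by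
        gcongr
        linarith [(le_abs_self _).trans_lt hx₀m]
    _ = ε := by rw [hη_def]; field_simp

end WijsmanLambdaSummable

lemma wijsmanLambdaSummable_iff_id {A : ℕ → Set X} {S : Set X} (hS : S.Nonempty) {l : ℕ → ℕ}
    (hl : StrictMono l) (hliml : 0 < liminf (fun n : ℕ => (n : ℝ) / l n) atTop) :
    WijsmanLambdaSummable A S l ↔ WijsmanLambdaSummable A S id := by
  obtain ⟨C, hC, hlC⟩ := exists_le_mul_of_liminf_div_pos hliml
  exact ⟨fun h => h.id_of_le_mul hS (fun _ => hl.le_apply) hC hlC,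
    fun h => h.comp hl.tendsto_atTop⟩

end Wijsman

theorem stmt_13_general {X : Type*} [MetricSpace X] (A : ℕ → Set X) (S : Set X)
    (hS : S.Nonempty)
    (l μ : ℕ → ℕ) (hl : StrictMono l)
    (hμ : StrictMono μ)
    (hliml : 0 < Filter.liminf (fun (n : ℕ) => (n : ℝ) / (l n : ℝ)) atTop)
    (hlimμ : 0 < Filter.liminf (fun (n : ℕ) => (n : ℝ) / (μ n : ℝ)) atTop) :
    (∀ x : X, Tendsto
      (fun n => (1 / (l n : ℝ)) * ∑ k ∈ Finset.Icc 1 (l n), infDist x (A k))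
      atTop (nhds (infDist x S))) ↔
    (∀ x : X, Tendsto
      (fun n => (1 / (μ n : ℝ)) * ∑ k ∈ Finset.Icc 1 (μ n), infDist x (A k))
      atTop (nhds (infDist x S))) :=
  (wijsmanLambdaSummable_iff_id hS hl hliml).trans (wijsmanLambdaSummable_iff_id hS hμ hlimμ).symm

theorem stmt_13 {X : Type*} [MetricSpace X] (A : ℕ → Set X) (S : Set X)
    (hA : ∀ k, (A k).Nonempty ∧ IsClosed (A k)) (hS : S.Nonempty) (hSc : IsClosed S)
    (hbdd : ∀ x : X, ∃ M : ℝ, ∀ k, infDist x (A k) ≤ M)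
    (l μ : ℕ → ℕ) (hl : StrictMono l) (hl1 : ∀ n, 1 ≤ l n)
    (hμ : StrictMono μ) (hμ1 : ∀ n, 1 ≤ μ n)
    (hliml : 0 < Filter.liminf (fun (n : ℕ) => (n : ℝ) / (l n : ℝ)) atTop)
    (hlimμ : 0 < Filter.liminf (fun (n : ℕ) => (n : ℝ) / (μ n : ℝ)) atTop) :
    (∀ x : X, Tendsto
      (fun n => (1 / (l n : ℝ)) * ∑ k ∈ Finset.Icc 1 (l n), infDist x (A k))
      atTop (nhds (infDist x S))) ↔
    (∀ x : X, Tendsto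
      (fun n => (1 / (μ n : ℝ)) * ∑ k ∈ Finset.Icc 1 (μ n), infDist x (A k))
      atTop (nhds (infDist x S))) :=
  stmt_13_general A S hS l μ hl hμ hliml hlimμ
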